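/- For all n ≥ 0 and all m ≥ 0, the number of permutations w of {1,…,n} with dep(w) = m equals Σ_p wt(p), where the sum is over all Motzkin paths p of length n with ar(p) = m. Equivalently, Σ_{w ∈ S_n} t^{dep(w)} = Σ_{p ∈ Motz_n} wt(p)·t^{ar(p)} as polynomials in t. -/

import Mathlib

/-- The three kinds of steps of a Motzkin path. -/
inductive Step : Type
  | U : Step
  | D : Step
  | H : Step
deriving DecidableEq
instance instFintypeStep : Fintype Step :=
  ⟨{Step.U, Step.D, Step.H}, fun x => by cases x <;> simp⟩
/-- Number of indices `i` with `i < m` (i.e. in the prefix of length `m`,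
with 0-based indexing) at which the word `p` has the letter `s`. -/
def countIn {n : ℕ} (p : Fin n → Step) (s : Step) (m : ℕ) : ℕ :=
  (Finset.univ.filter (fun i : Fin n => (i : ℕ) < m ∧ p i = s)).card
/-- A word `p` of length `n` over `{U, D, H}` is a Motzkin path if every
prefix contains at least as many `U`'s as `D`'s and the whole word contains
equally many `U`'s and `D`'s. -/
def IsMotzkin {n : ℕ} (p : Fin n → Step) : Prop :=
  (∀ m ≤ n, countIn p Step.D m ≤ countIn p Step.U m) ∧
  countIn p Step.U n = countIn p Step.D n
/-- The map `φ` from permutations of `{1,…,n}` to words over `{U,D,H}`: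
`p_i = U` if `w⁻¹(i) > i < w(i)`, `p_i = D` if `w⁻¹(i) < i > w(i)`,
and `p_i = H` otherwise. -/
def phi {n : ℕ} (w : Equiv.Perm (Fin n)) : Fin n → Step := fun i =>
  if i < w.symm i ∧ i < w i then Step.U
  else if w.symm i < i ∧ w i < i then Step.D
  else Step.H
/-- The height `h_i` of step `i`: the number of `j ≤ i` with `p_j = U` minus
the number of `j ≤ i` with `p_j = D`, increased by `1` when `p_i = D`. -/
def heightAt {n : ℕ} (p : Fin n → Step) (i : Fin n) : ℕ :=
  ((Finset.univ.filter (fun j : Fin n => j ≤ i ∧ p j = Step.U)).card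
    - (Finset.univ.filter (fun j : Fin n => j ≤ i ∧ p j = Step.D)).card)
    + (if p i = Step.D then 1 else 0)
/-- The area below a Motzkin path:
`ar(p) = ∑_{i : p_i = H} h_i + ∑_{i : p_i ∈ {U,D}} (h_i - 1/2)`. -/
def area {n : ℕ} (p : Fin n → Step) : ℚ :=
  (∑ i ∈ Finset.univ.filter (fun i : Fin n => p i = Step.H),
    (heightAt p i : ℚ))
  + ∑ i ∈ Finset.univ.filter (fun i : Fin n => p i = Step.U ∨ p i = Step.D),
      ((heightAt p i : ℚ) - 1/2)
/-- The depth of a permutation `w` of `{1,…,n}`: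
`dep(w) = ∑_{i : w(i) > i} (w(i) - i)`. -/
def dep {n : ℕ} (w : Equiv.Perm (Fin n)) : ℕ :=
  ∑ i ∈ Finset.univ.filter (fun i : Fin n => i < w i), ((w i : ℕ) - (i : ℕ))
/-- The weight of a Motzkin path: the product over all steps of `h_i` for
`U` and `D` steps and of `2h_i + 1` for `H` steps. -/
def wt {n : ℕ} (p : Fin n → Step) : ℕ :=
  ∏ i : Fin n, (if p i = Step.H then 2 * heightAt p i + 1 else heightAt p i)
instance {n : ℕ} : DecidablePred (IsMotzkin (n := n)) := fun p => by
  unfold IsMotzkin countIn; infer_instance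

/-!
The height of `phi w` after `k` steps is the number of arcs `j ↦ w j` with `j < k ≤ w j`,
so `phi w` is a Motzkin path and, summing over `k`, `area (phi w) = dep w`.
The permutations in the fibre of `phi` over a Motzkin path `p` are built left to right as
partial injections (Laguerre histories). At height `h` there are `h` positions waiting for an
outgoing arc and `h` waiting for an incoming one, so a `U` step can be placed in one way, a
`D` step in `h²` ways (close one arc of each kind) and an `H` step in `2h + 1` ways (a fixed
point, or close one arc). The product of these counts is `wt p`: along the path,
`∏ (weights so far) = ∏ (counts so far) · (current height)!`.
-/

open Finset

variable {n : ℕ}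

section Paths

@[to_additive]
lemma prod_filter_val_lt_succ {M : Type*} [CommMonoid M] (f : Fin n → M) {k : ℕ}
    (hk : k < n) :
    ∏ i ∈ univ.filter (fun i : Fin n => (i : ℕ) < k + 1), f i =
      (∏ i ∈ univ.filter (fun i : Fin n => (i : ℕ) < k), f i) * f ⟨k, hk⟩ := by
  have : univ.filter (fun i : Fin n => (i : ℕ) < k + 1) =
      insert ⟨k, hk⟩ (univ.filter (fun i : Fin n => (i : ℕ) < k)) := by
    ext i
    simp only [mem_filter, mem_univ, true_and, mem_insert, Fin.ext_iff]
    omega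
  rw [this, prod_insert (by simp), mul_comm]

lemma filter_val_lt_of_le {k : ℕ} (hk : n ≤ k) :
    univ.filter (fun i : Fin n => (i : ℕ) < k) = univ :=
  filter_true_of_mem fun i _ => i.isLt.trans_le hk

lemma countIn_eq_sum (p : Fin n → Step) (s : Step) (m : ℕ) :
    countIn p s m =
      ∑ i ∈ univ.filter (fun i : Fin n => (i : ℕ) < m), if p i = s then 1 else 0 := by
  rw [countIn, card_filter, sum_filter]
  simp only [ite_and]

lemma countIn_zero (p : Fin n → Step) (s : Step) : countIn p s 0 = 0 := by
  simp [countIn]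

lemma countIn_succ (p : Fin n → Step) (s : Step) {k : ℕ} (hk : k < n) :
    countIn p s (k + 1) = countIn p s k + if p ⟨k, hk⟩ = s then 1 else 0 := by
  simp only [countIn_eq_sum, sum_filter_val_lt_succ _ hk]

def heightAfter (p : Fin n → Step) (k : ℕ) : ℕ :=
  countIn p Step.U k - countIn p Step.D k

lemma heightAt_eq_heightAfter (p : Fin n → Step) (i : Fin n) :
    heightAt p i = heightAfter p ((i : ℕ) + 1) + if p i = Step.D then 1 else 0 := by
  have (s : Step) : univ.filter (fun j : Fin n => j ≤ i ∧ p j = s) =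
      univ.filter (fun j : Fin n => (j : ℕ) < i + 1 ∧ p j = s) :=
    filter_congr fun j _ => by rw [Fin.le_def, Nat.lt_succ_iff]
  rw [heightAt, this, this]
  rfl

lemma IsMotzkin.heightAfter_succ_add {p : Fin n → Step} (hp : IsMotzkin p) (i : Fin n) :
    heightAfter p ((i : ℕ) + 1) + (if p i = Step.D then 1 else 0) =
      heightAfter p i + if p i = Step.U then 1 else 0 := by
  have hU := countIn_succ p Step.U i.isLt
  have hD := countIn_succ p Step.D i.isLt
  have h₁ := hp.1 (i + 1) i.isLt
  have h₀ := hp.1 i i.isLt.le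
  simp only [Fin.eta] at hU hD
  unfold heightAfter
  cases hi : p i <;> simp only [hi, reduceCtorEq, if_true, if_false] at hU hD ⊢ <;> omega

lemma IsMotzkin.heightAfter_length {p : Fin n → Step} (hp : IsMotzkin p) :
    heightAfter p n = 0 := by
  simp [heightAfter, hp.2]

lemma area_eq_sum_heightAfter {p : Fin n → Step}
    (hp : countIn p Step.U n = countIn p Step.D n) :
    area p = ∑ i : Fin n, (heightAfter p ((i : ℕ) + 1) : ℚ) := by
  have hUD : ∑ i : Fin n,
      ((if p i = Step.D then 1 else 0) - (if p i = Step.U then 1 else 0) : ℚ) = 0 := by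
    rw [sum_sub_distrib, sum_boole, sum_boole, sub_eq_zero]
    simp only [countIn_eq_sum, filter_val_lt_of_le le_rfl, sum_boole] at hp
    exact_mod_cast hp.symm
  calc area p = ∑ i : Fin n, ((heightAfter p ((i : ℕ) + 1) : ℚ) +
        ((if p i = Step.D then 1 else 0) - (if p i = Step.U then 1 else 0)) / 2) := by
        rw [area, sum_filter, sum_filter, ← sum_add_distrib]
        refine sum_congr rfl fun i _ => ?_
        rw [heightAt_eq_heightAfter]
        cases p i <;> simp only [reduceCtorEq, ↓reduceIte, or_false, or_true, or_self,
          add_zero, zero_add, sub_zero, zero_sub, sub_self, zero_div, Nat.cast_add,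
          Nat.cast_one] <;> ring
    _ = _ := by rw [sum_add_distrib, ← sum_div, hUD, zero_div, add_zero]

/-- The number of ways a step of each kind extends a partial Laguerre history at height `h`. -/
def stepCount : Step → ℕ → ℕ
  | .U, _ => 1
  | .D, h => h * h
  | .H, h => 2 * h + 1

lemma IsMotzkin.factorial_mul_wt_factor {p : Fin n → Step} (hp : IsMotzkin p) (i : Fin n) :
    (heightAfter p i).factorial *
        (if p i = Step.H then 2 * heightAt p i + 1 else heightAt p i) =
      stepCount (p i) (heightAfter p i) * (heightAfter p ((i : ℕ) + 1)).factorial := by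
  have hstep := hp.heightAfter_succ_add i
  rw [heightAt_eq_heightAfter]
  cases hi : p i <;>
    simp only [hi, reduceCtorEq, if_true, if_false, add_zero, stepCount] at hstep ⊢
  · rw [hstep, Nat.factorial_succ]; ring
  · rw [← hstep, Nat.factorial_succ]; ring
  · rw [hstep, mul_comm]

lemma IsMotzkin.wt_eq_prod_stepCount {p : Fin n → Step} (hp : IsMotzkin p) :
    wt p = ∏ i : Fin n, stepCount (p i) (heightAfter p i) := by
  suffices ∀ k ≤ n, (∏ i ∈ univ.filter (fun i : Fin n => (i : ℕ) < k),
      (if p i = Step.H then 2 * heightAt p i + 1 else heightAt p i)) =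
      (∏ i ∈ univ.filter (fun i : Fin n => (i : ℕ) < k), stepCount (p i) (heightAfter p i)) *
        (heightAfter p k).factorial by
    simpa [wt, hp.heightAfter_length, filter_val_lt_of_le] using this n le_rfl
  intro k hk
  induction k with
  | zero => simp [heightAfter, countIn_zero]
  | succ k ih =>
    have hfactor := hp.factorial_mul_wt_factor ⟨k, hk⟩
    dsimp only at hfactor
    rw [prod_filter_val_lt_succ _ hk, prod_filter_val_lt_succ _ hk, ih (by omega), mul_assoc,
      hfactor, ← mul_assoc]

end Paths

section Phi

def openArcs (w : Equiv.Perm (Fin n)) (k : ℕ) : ℕ :=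
  (univ.filter fun j : Fin n => (j : ℕ) < k ∧ k ≤ (w j : ℕ)).card

lemma openArcs_succ_add (w : Equiv.Perm (Fin n)) {k : ℕ} (hk : k < n) :
    openArcs w (k + 1) + (if ((w.symm ⟨k, hk⟩ : Fin n) : ℕ) < k then 1 else 0) =
      openArcs w k + if k < ((w ⟨k, hk⟩ : Fin n) : ℕ) then 1 else 0 := by
  rw [← Fintype.sum_ite_eq' (w.symm ⟨k, hk⟩) fun j : Fin n => if (j : ℕ) < k then 1 else 0,
    ← Fintype.sum_ite_eq' (⟨k, hk⟩ : Fin n) fun j => if k < (w j : ℕ) then 1 else 0,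
    openArcs, openArcs, card_filter, card_filter, ← sum_add_distrib, ← sum_add_distrib]
  refine sum_congr rfl fun j _ => ?_
  simp only [Equiv.eq_symm_apply, Fin.ext_iff]
  split_ifs <;> omega

lemma openArcs_length (w : Equiv.Perm (Fin n)) : openArcs w n = 0 :=
  card_eq_zero.2 <| filter_eq_empty_iff.2 fun j _ h => by have := (w j).isLt; omega

lemma ite_phi_U_add_eq_ite_phi_D_add (w : Equiv.Perm (Fin n)) (x : Fin n) :
    (if phi w x = Step.U then 1 else 0) + (if w.symm x < x then 1 else 0) =
      (if phi w x = Step.D then 1 else 0) + if x < w x then 1 else 0 := by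
  have hfix : w x = x ↔ w.symm x = x := by rw [Equiv.symm_apply_eq, eq_comm]
  unfold phi
  split_ifs <;> simp_all [lt_asymm] <;> omega

lemma countIn_phi (w : Equiv.Perm (Fin n)) {k : ℕ} (hk : k ≤ n) :
    countIn (phi w) Step.U k = countIn (phi w) Step.D k + openArcs w k := by
  induction k with
  | zero => simp [countIn_zero, openArcs]
  | succ k ih =>
    have hkn : k < n := hk
    have harcs := openArcs_succ_add w hkn
    have hphi := ite_phi_U_add_eq_ite_phi_D_add w ⟨k, hkn⟩
    simp only [Fin.lt_def] at hphi
    rw [countIn_succ _ _ hkn, countIn_succ _ _ hkn]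
    have := ih hkn.le
    omega

lemma isMotzkin_phi (w : Equiv.Perm (Fin n)) : IsMotzkin (phi w) := by
  refine ⟨fun m hm => ?_, ?_⟩
  · rw [countIn_phi w hm]; omega
  · rw [countIn_phi w le_rfl, openArcs_length, add_zero]

lemma heightAfter_phi (w : Equiv.Perm (Fin n)) {k : ℕ} (hk : k ≤ n) :
    heightAfter (phi w) k = openArcs w k := by
  simp [heightAfter, countIn_phi w hk]

lemma dep_eq_sum_openArcs (w : Equiv.Perm (Fin n)) :
    dep w = ∑ i : Fin n, openArcs w ((i : ℕ) + 1) := by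
  calc dep w = ∑ j, (Ico j (w j)).card := by
        rw [dep, sum_filter_of_ne fun j _ h => by omega]
        simp only [Fin.card_Ico]
    _ = ∑ j, ∑ i, if i ∈ Ico j (w j) then 1 else 0 := by
        simp only [sum_boole, Nat.cast_id, filter_mem_eq_inter, univ_inter]
    _ = ∑ i : Fin n, openArcs w ((i : ℕ) + 1) := by
        rw [sum_comm]
        refine sum_congr rfl fun i _ => ?_
        rw [openArcs, card_filter]
        refine sum_congr rfl fun j _ => ?_
        simp only [mem_Ico, Fin.le_def, Fin.lt_def]
        exact if_congr (by omega) rfl rfl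

lemma area_phi (w : Equiv.Perm (Fin n)) : area (phi w) = dep w := by
  rw [area_eq_sum_heightAfter (isMotzkin_phi w).2, dep_eq_sum_openArcs]
  push_cast
  exact sum_congr rfl fun i _ => by rw [heightAfter_phi w i.isLt]

end Phi

section LocalArcs

/-- `phi` for the partial permutation with arcs `s`: a missing arc at `i` counts as pointing
to the right, like an arc of a permutation that leaves the first `k` positions. -/
def stepAt (s : Finset (Fin n × Fin n)) (i : Fin n) : Step :=
  if ∀ q ∈ s, (q.1 = i → i < q.2) ∧ (q.2 = i → i < q.1) then Step.U
  else if (∃ q ∈ s, q.1 = i ∧ q.2 < i) ∧ (∃ q ∈ s, q.2 = i ∧ q.1 < i) then Step.D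
  else Step.H

lemma stepAt_union_of_forall {s t : Finset (Fin n × Fin n)} {i : Fin n}
    (ht : ∀ q ∈ t, (q.1 = i → i < q.2) ∧ (q.2 = i → i < q.1)) :
    stepAt (s ∪ t) i = stepAt s i := by
  have hU : (∀ q ∈ s ∪ t, (q.1 = i → i < q.2) ∧ (q.2 = i → i < q.1)) ↔
      ∀ q ∈ s, (q.1 = i → i < q.2) ∧ (q.2 = i → i < q.1) :=
    ⟨fun h q hq => h q (mem_union_left _ hq), fun h q hq => (mem_union.1 hq).elim (h q) (ht q)⟩
  have hD₁ : (∃ q ∈ s ∪ t, q.1 = i ∧ q.2 < i) ↔ ∃ q ∈ s, q.1 = i ∧ q.2 < i := by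
    simp only [mem_union, or_and_right, exists_or]
    exact or_iff_left fun ⟨q, hq, h₁, h₂⟩ => (ht q hq).1 h₁ |>.asymm h₂
  have hD₂ : (∃ q ∈ s ∪ t, q.2 = i ∧ q.1 < i) ↔ ∃ q ∈ s, q.2 = i ∧ q.1 < i := by
    simp only [mem_union, or_and_right, exists_or]
    exact or_iff_left fun ⟨q, hq, h₁, h₂⟩ => (ht q hq).2 h₁ |>.asymm h₂
  simp only [stepAt, hU, hD₁, hD₂]

/-- The possible sets of arcs at a position `x` of step type `τ`, when the positions in `A` still
wait for an outgoing arc and those in `B` for an incoming one. -/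
def localArcs (x : Fin n) (A B : Finset (Fin n)) : Step → Finset (Finset (Fin n × Fin n))
  | .U => {∅}
  | .D => (A ×ˢ B).image fun jv => {(jv.1, x), (x, jv.2)}
  | .H => insert {(x, x)} ((A.image fun j => {(j, x)}) ∪ B.image fun v => {(x, v)})

lemma stepAt_empty (x : Fin n) : stepAt ∅ x = Step.U := by simp [stepAt]

lemma stepAt_loop (x : Fin n) : stepAt {(x, x)} x = Step.H := by simp [stepAt]

lemma stepAt_in {j x : Fin n} (hj : j < x) : stepAt {(j, x)} x = Step.H := by
  simp [stepAt, hj.ne, hj.not_gt]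

lemma stepAt_out {x v : Fin n} (hv : v < x) : stepAt {(x, v)} x = Step.H := by
  simp [stepAt, hv.ne, hv.not_gt]

lemma stepAt_in_out {j x v : Fin n} (hj : j < x) (hv : v < x) :
    stepAt {(j, x), (x, v)} x = Step.D := by
  simp [stepAt, hj, hv, hj.ne, hv.ne, hv.not_gt]

lemma card_localArcs {x : Fin n} {A B : Finset (Fin n)} (hA : ∀ j ∈ A, j < x)
    (hB : ∀ v ∈ B, v < x) {h : ℕ} (hAh : A.card = h) (hBh : B.card = h) (τ : Step) :
    (localArcs x A B τ).card = stepCount τ h := by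
  cases τ with
  | U => rfl
  | D =>
    rw [localArcs, card_image_of_injOn, card_product, hAh, hBh, stepCount]
    rintro ⟨j, v⟩ hjv ⟨j', v'⟩ hjv' heq
    simp only [coe_product, Set.mem_prod, mem_coe] at hjv hjv'
    have := hA j hjv.1
    have := hB v hjv.2
    simp only [Finset.ext_iff] at heq
    have := heq (j, x)
    have := heq (x, v)
    grind
  | H =>
    have hAx : ∀ j ∈ A, j ≠ x := fun j hj => (hA j hj).ne
    have hBx : ∀ v ∈ B, v ≠ x := fun v hv => (hB v hv).ne
    rw [localArcs, card_insert_of_notMem, card_union_of_disjoint, card_image_of_injective _ ?_,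
      card_image_of_injective _ ?_, hAh, hBh, stepCount]
    · ring
    · intro v v' h; simpa using h
    · intro j j' h; simpa using h
    · simp only [disjoint_left, mem_image, not_exists, not_and, forall_exists_index, and_imp]
      rintro _ j hj rfl v - h
      exact hAx j hj (Prod.mk.inj (singleton_inj.1 h)).1.symm
    · simp only [mem_union, mem_image, singleton_inj, Prod.mk.injEq, not_or, not_exists, not_and]
      exact ⟨fun j hj h => absurd h (hAx j hj), fun v hv _ => hBx v hv⟩

lemma mem_localArcs_stepAt {x : Fin n} {A B : Finset (Fin n)} (hA : ∀ j ∈ A, j < x)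
    (hB : ∀ v ∈ B, v < x) {t : Finset (Fin n × Fin n)}
    (hends : ∀ q ∈ t, q.1 = x ∧ (q.2 = x ∨ q.2 ∈ B) ∨ q.2 = x ∧ q.1 ∈ A)
    (hfst : Set.InjOn Prod.fst (t : Set (Fin n × Fin n)))
    (hsnd : Set.InjOn Prod.snd (t : Set (Fin n × Fin n))) :
    t ∈ localArcs x A B (stepAt t x) := by
  simp only [Set.InjOn, mem_coe] at hfst hsnd
  have hAx : x ∉ A := fun h => lt_irrefl x (hA x h)
  have hBx : x ∉ B := fun h => lt_irrefl x (hB x h)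
  by_cases hxx : (x, x) ∈ t
  · rw [show t = {(x, x)} from ext fun q => by have := hends q; simp only [mem_singleton]; grind]
    simp [localArcs, stepAt_loop]
  by_cases hout : ∃ v, (x, v) ∈ t <;> by_cases hin : ∃ j, (j, x) ∈ t
  · obtain ⟨⟨v, hv⟩, ⟨j, hj⟩⟩ := And.intro hout hin
    have hvB : v ∈ B := by have := hends _ hv; grind
    have hjA : j ∈ A := by have := hends _ hj; grind
    rw [show t = {(j, x), (x, v)} from
        ext fun q => by have := hends q; simp only [mem_insert, mem_singleton]; grind,
      stepAt_in_out (hA j hjA) (hB v hvB)]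
    simp only [localArcs, mem_image, mem_product]
    exact ⟨(j, v), ⟨hjA, hvB⟩, rfl⟩
  · obtain ⟨v, hv⟩ := hout
    have hvB : v ∈ B := by have := hends _ hv; grind
    rw [show t = {(x, v)} from ext fun q => by have := hends q; simp only [mem_singleton]; grind,
      stepAt_out (hB v hvB)]
    simp only [localArcs, mem_insert, mem_union, mem_image]
    exact Or.inr (Or.inr ⟨v, hvB, rfl⟩)
  · obtain ⟨j, hj⟩ := hin
    have hjA : j ∈ A := by have := hends _ hj; grind
    rw [show t = {(j, x)} from ext fun q => by have := hends q; simp only [mem_singleton]; grind,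
      stepAt_in (hA j hjA)]
    simp only [localArcs, mem_insert, mem_union, mem_image]
    exact Or.inr (Or.inl ⟨j, hjA, rfl⟩)
  · rw [show t = ∅ from ext fun q => by
      have := hends q; simp only [notMem_empty, iff_false]; grind]
    simp [localArcs, stepAt_empty]

lemma mem_localArcs_iff {x : Fin n} {A B : Finset (Fin n)} (hA : ∀ j ∈ A, j < x)
    (hB : ∀ v ∈ B, v < x) {τ : Step} {t : Finset (Fin n × Fin n)} :
    t ∈ localArcs x A B τ ↔
      (∀ q ∈ t, q.1 = x ∧ (q.2 = x ∨ q.2 ∈ B) ∨ q.2 = x ∧ q.1 ∈ A) ∧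
        Set.InjOn Prod.fst (t : Set (Fin n × Fin n)) ∧
        Set.InjOn Prod.snd (t : Set (Fin n × Fin n)) ∧ stepAt t x = τ := by
  refine ⟨fun ht => ?_, fun ⟨hends, hfst, hsnd, hτ⟩ =>
    hτ ▸ mem_localArcs_stepAt hA hB hends hfst hsnd⟩
  cases τ <;> simp only [localArcs, mem_singleton, mem_image, mem_insert, mem_union,
    mem_product] at ht
  · simp [ht, stepAt_empty]
  · obtain ⟨⟨j, v⟩, ⟨hj, hv⟩, rfl⟩ := ht
    have := hA j hj
    have := hB v hv
    simp only [stepAt_in_out (hA j hj) (hB v hv), Set.InjOn, coe_insert, coe_singleton,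
      Set.mem_insert_iff, Set.mem_singleton_iff, mem_insert, mem_singleton, forall_eq_or_imp,
      forall_eq, Prod.mk.injEq]
    grind
  · rcases ht with rfl | ⟨j, hj, rfl⟩ | ⟨v, hv, rfl⟩
    · simp [stepAt_loop]
    · simp only [mem_singleton, forall_eq, coe_singleton, Set.injOn_singleton,
        stepAt_in (hA j hj), and_true, true_and]
      grind
    · simp only [mem_singleton, forall_eq, coe_singleton, Set.injOn_singleton,
        stepAt_out (hB v hv), and_true, true_and]
      grind

lemma touches_of_mem_localArcs {x : Fin n} {A B : Finset (Fin n)} (hA : ∀ j ∈ A, j < x)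
    (hB : ∀ v ∈ B, v < x) {τ : Step} {t : Finset (Fin n × Fin n)}
    (ht : t ∈ localArcs x A B τ) : ∀ q ∈ t, q.1 = x ∨ q.2 = x := fun q hq => by
  have := ((mem_localArcs_iff hA hB).1 ht).1 q hq
  grind

lemma card_add_ite_of_mem_localArcs {x : Fin n} {A B : Finset (Fin n)} (hA : ∀ j ∈ A, j < x)
    {τ : Step} {t : Finset (Fin n × Fin n)} (ht : t ∈ localArcs x A B τ) :
    t.card + (if τ = Step.U then 1 else 0) = (if τ = Step.D then 1 else 0) + 1 := by
  cases τ <;> simp only [localArcs, mem_singleton, mem_image, mem_insert, mem_union,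
    mem_product] at ht
  · simp [ht]
  · obtain ⟨⟨j, v⟩, ⟨hj, -⟩, rfl⟩ := ht
    rw [card_pair fun h => (hA j hj).ne (Prod.mk.inj h).1]
    rfl
  · rcases ht with rfl | ⟨j, -, rfl⟩ | ⟨v, -, rfl⟩ <;> rfl

end LocalArcs

section Histories

def arcsAt (x : Fin n) (s : Finset (Fin n × Fin n)) : Finset (Fin n × Fin n) :=
  s.filter fun q => q.1 = x ∨ q.2 = x

def dropArcsAt (x : Fin n) (s : Finset (Fin n × Fin n)) : Finset (Fin n × Fin n) :=
  s.filter fun q => ¬(q.1 = x ∨ q.2 = x)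

lemma dropArcsAt_union_arcsAt (x : Fin n) (s : Finset (Fin n × Fin n)) :
    dropArcsAt x s ∪ arcsAt x s = s := by
  rw [union_comm]
  exact filter_union_filter_not_eq _ _

lemma dropArcsAt_union {x : Fin n} {s t : Finset (Fin n × Fin n)}
    (hs : ∀ q ∈ s, q.1 ≠ x ∧ q.2 ≠ x) (ht : ∀ q ∈ t, q.1 = x ∨ q.2 = x) :
    dropArcsAt x (s ∪ t) = s := by
  rw [dropArcsAt, filter_union, filter_true_of_mem fun q hq => by grind,
    filter_false_of_mem fun q hq => by grind, union_empty]

lemma arcsAt_union {x : Fin n} {s t : Finset (Fin n × Fin n)}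
    (hs : ∀ q ∈ s, q.1 ≠ x ∧ q.2 ≠ x) (ht : ∀ q ∈ t, q.1 = x ∨ q.2 = x) :
    arcsAt x (s ∪ t) = t := by
  rw [arcsAt, filter_union, filter_false_of_mem fun q hq => by grind,
    filter_true_of_mem ht, empty_union]

/-- The arcs `(i, w i)` with `i, w i < k` of any `w` with `phi w = p` form a partial history
of `p` of length `k`. -/
structure IsPartialHistory (p : Fin n → Step) (k : ℕ) (s : Finset (Fin n × Fin n)) : Prop where
  lt : ∀ q ∈ s, (q.1 : ℕ) < k ∧ (q.2 : ℕ) < k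
  injOn_fst : Set.InjOn Prod.fst (s : Set (Fin n × Fin n))
  injOn_snd : Set.InjOn Prod.snd (s : Set (Fin n × Fin n))
  stepAt_eq : ∀ i : Fin n, (i : ℕ) < k → stepAt s i = p i

open Classical in
noncomputable def histories (p : Fin n → Step) (k : ℕ) : Finset (Finset (Fin n × Fin n)) :=
  univ.filter (IsPartialHistory p k)

lemma mem_histories {p : Fin n → Step} {k : ℕ} {s : Finset (Fin n × Fin n)} :
    s ∈ histories p k ↔ IsPartialHistory p k s := by
  simp [histories]

def openSources (s : Finset (Fin n × Fin n)) (k : ℕ) : Finset (Fin n) :=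
  univ.filter fun j => (j : ℕ) < k ∧ ∀ q ∈ s, q.1 ≠ j

def openTargets (s : Finset (Fin n × Fin n)) (k : ℕ) : Finset (Fin n) :=
  univ.filter fun v => (v : ℕ) < k ∧ ∀ q ∈ s, q.2 ≠ v

variable {p : Fin n → Step} {k : ℕ} {x : Fin n} {s : Finset (Fin n × Fin n)}

lemma lt_of_mem_openSources (hx : (x : ℕ) = k) {j : Fin n} (hj : j ∈ openSources s k) :
    j < x := by
  simp only [openSources, mem_filter] at hj
  exact Fin.lt_def.2 (hx ▸ hj.2.1)

lemma lt_of_mem_openTargets (hx : (x : ℕ) = k) {v : Fin n} (hv : v ∈ openTargets s k) :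
    v < x := by
  simp only [openTargets, mem_filter] at hv
  exact Fin.lt_def.2 (hx ▸ hv.2.1)

lemma IsPartialHistory.ne_of_mem (hs : IsPartialHistory p k s) (hx : (x : ℕ) = k) :
    ∀ q ∈ s, q.1 ≠ x ∧ q.2 ≠ x := fun q hq => by
  have := hs.lt q hq
  constructor <;> rintro rfl <;> omega

lemma IsPartialHistory.drop (hs : IsPartialHistory p (k + 1) s) (hx : (x : ℕ) = k) :
    IsPartialHistory p k (dropArcsAt x s) where
  lt q hq := by
    simp only [dropArcsAt, mem_filter, not_or] at hq
    have := hs.lt q hq.1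
    have := Fin.val_ne_of_ne hq.2.1
    have := Fin.val_ne_of_ne hq.2.2
    omega
  injOn_fst := hs.injOn_fst.mono (coe_subset.2 (filter_subset _ _))
  injOn_snd := hs.injOn_snd.mono (coe_subset.2 (filter_subset _ _))
  stepAt_eq i hi := by
    have hix : i < x := Fin.lt_def.2 (hx ▸ hi)
    rw [← hs.stepAt_eq i (by omega), ← dropArcsAt_union_arcsAt x s,
      stepAt_union_of_forall fun q hq => ?_, dropArcsAt_union_arcsAt]
    simp only [arcsAt, mem_filter] at hq
    grind

lemma IsPartialHistory.union_of_mem_localArcs (hs : IsPartialHistory p k s) (hx : (x : ℕ) = k)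
    {t : Finset (Fin n × Fin n)}
    (ht : t ∈ localArcs x (openSources s k) (openTargets s k) (p x)) :
    IsPartialHistory p (k + 1) (s ∪ t) := by
  obtain ⟨hends, hfst, hsnd, hstep⟩ := (mem_localArcs_iff (fun _ => lt_of_mem_openSources hx)
    (fun _ => lt_of_mem_openTargets hx)).1 ht
  have hne := hs.ne_of_mem hx
  have hs_fst := hs.injOn_fst
  have hs_snd := hs.injOn_snd
  simp only [openSources, openTargets, mem_filter, mem_univ, true_and] at hends
  simp only [Set.InjOn, mem_coe] at hfst hsnd hs_fst hs_snd
  refine ⟨fun q hq => ?_, ?_, ?_, fun i hi => ?_⟩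
  · rcases mem_union.1 hq with hq | hq
    · have := hs.lt q hq; omega
    · have := hends q hq
      grind
  · simp only [Set.InjOn, coe_union, Set.mem_union, mem_coe]
    grind
  · simp only [Set.InjOn, coe_union, Set.mem_union, mem_coe]
    grind
  · rcases (Nat.lt_succ_iff.1 hi).lt_or_eq with hi | hi
    · have hix : i < x := Fin.lt_def.2 (hx ▸ hi)
      rw [stepAt_union_of_forall fun q hq => by grind, hs.stepAt_eq i hi]
    · obtain rfl : i = x := Fin.ext (hi.trans hx.symm)
      rw [union_comm, stepAt_union_of_forall fun q hq => by grind, hstep]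

lemma IsPartialHistory.arcsAt_mem_localArcs (hs : IsPartialHistory p (k + 1) s)
    (hx : (x : ℕ) = k) :
    arcsAt x s ∈ localArcs x (openSources (dropArcsAt x s) k) (openTargets (dropArcsAt x s) k)
      (p x) := by
  rw [mem_localArcs_iff (fun _ => lt_of_mem_openSources hx) (fun _ => lt_of_mem_openTargets hx)]
  have hfst := hs.injOn_fst
  have hsnd := hs.injOn_snd
  simp only [Set.InjOn, mem_coe] at hfst hsnd
  refine ⟨fun q hq => ?_, hs.injOn_fst.mono (coe_subset.2 (filter_subset _ _)),
    hs.injOn_snd.mono (coe_subset.2 (filter_subset _ _)), ?_⟩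
  · simp only [arcsAt, mem_filter] at hq
    simp only [openSources, openTargets, dropArcsAt, mem_filter, mem_univ, true_and]
    have := hs.lt q hq.1
    grind
  · calc stepAt (arcsAt x s) x = stepAt (arcsAt x s ∪ dropArcsAt x s) x :=
          (stepAt_union_of_forall fun q hq => by
            simp only [dropArcsAt, not_or, mem_filter] at hq
            grind).symm
      _ = p x := by rw [union_comm, dropArcsAt_union_arcsAt, hs.stepAt_eq x (by omega)]

lemma card_filter_forall_ne_add_card {k : ℕ} {f : Fin n × Fin n → Fin n}
    (hf : Set.InjOn f (s : Set (Fin n × Fin n))) (hs : ∀ q ∈ s, (f q : ℕ) < k)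
    (hk : k ≤ n) :
    (univ.filter fun j : Fin n => (j : ℕ) < k ∧ ∀ q ∈ s, f q ≠ j).card + s.card = k := by
  have hsub : s.image f ⊆ univ.filter fun j : Fin n => (j : ℕ) < k := by
    intro j hj
    obtain ⟨q, hq, rfl⟩ := mem_image.1 hj
    simpa using hs q hq
  have : (univ.filter fun j : Fin n => (j : ℕ) < k ∧ ∀ q ∈ s, f q ≠ j) =
      (univ.filter fun j : Fin n => (j : ℕ) < k) \ s.image f := by
    ext j
    simp
  have hle := card_le_card hsub
  rw [Fin.card_filter_val_lt, min_eq_right hk] at hle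
  rw [this, card_sdiff_of_subset hsub, ← card_image_of_injOn hf, Fin.card_filter_val_lt,
    min_eq_right hk, Nat.sub_add_cancel hle]

lemma IsPartialHistory.card_add_countIn (hs : IsPartialHistory p k s) (hk : k ≤ n) :
    s.card + countIn p Step.U k = countIn p Step.D k + k := by
  induction k generalizing s with
  | zero =>
    obtain rfl : s = ∅ := eq_empty_of_forall_notMem fun q hq => by have := hs.lt q hq; omega
    simp [countIn_zero]
  | succ k ih =>
    have hkn : k < n := hk
    rw [countIn_succ _ _ hkn, countIn_succ _ _ hkn]
    set x : Fin n := ⟨k, hkn⟩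
    have hcard := card_add_ite_of_mem_localArcs (fun _ => lt_of_mem_openSources rfl)
      (hs.arcsAt_mem_localArcs (x := x) rfl)
    have hsplit : (arcsAt x s).card + (dropArcsAt x s).card = s.card :=
      card_filter_add_card_filter_not _
    have := ih (hs.drop (x := x) rfl) hkn.le
    omega

lemma IsPartialHistory.card_openSources (hs : IsPartialHistory p k s) (hk : k ≤ n) :
    (openSources s k).card = heightAfter p k := by
  have := card_filter_forall_ne_add_card hs.injOn_fst (fun q hq => (hs.lt q hq).1) hk
  have := hs.card_add_countIn hk
  rw [openSources, heightAfter]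
  omega

lemma IsPartialHistory.card_openTargets (hs : IsPartialHistory p k s) (hk : k ≤ n) :
    (openTargets s k).card = heightAfter p k := by
  have := card_filter_forall_ne_add_card hs.injOn_snd (fun q hq => (hs.lt q hq).2) hk
  have := hs.card_add_countIn hk
  rw [openTargets, heightAfter]
  omega

lemma IsPartialHistory.filter_drop_eq_image (hs : IsPartialHistory p k s) (hx : (x : ℕ) = k) :
    (histories p (k + 1)).filter (fun s' => dropArcsAt x s' = s) =
      (localArcs x (openSources s k) (openTargets s k) (p x)).image (s ∪ ·) := by
  ext s'
  simp only [mem_filter, mem_histories, mem_image]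
  constructor
  · rintro ⟨hs', rfl⟩
    exact ⟨arcsAt x s', hs'.arcsAt_mem_localArcs hx, dropArcsAt_union_arcsAt x s'⟩
  · rintro ⟨t, ht, rfl⟩
    exact ⟨hs.union_of_mem_localArcs hx ht, dropArcsAt_union (hs.ne_of_mem hx)
      (touches_of_mem_localArcs (fun _ => lt_of_mem_openSources hx)
        (fun _ => lt_of_mem_openTargets hx) ht)⟩

lemma IsPartialHistory.card_filter_drop (hs : IsPartialHistory p k s) (hx : (x : ℕ) = k)
    (hk : k ≤ n) :
    ((histories p (k + 1)).filter (fun s' => dropArcsAt x s' = s)).card =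
      stepCount (p x) (heightAfter p k) := by
  have hA : ∀ j ∈ openSources s k, j < x := fun _ => lt_of_mem_openSources hx
  have hB : ∀ v ∈ openTargets s k, v < x := fun _ => lt_of_mem_openTargets hx
  rw [hs.filter_drop_eq_image hx, card_image_of_injOn, card_localArcs hA hB
    (hs.card_openSources hk) (hs.card_openTargets hk)]
  intro t ht t' ht' h
  dsimp only at h
  rw [← arcsAt_union (hs.ne_of_mem hx) (touches_of_mem_localArcs hA hB ht), h,
    arcsAt_union (hs.ne_of_mem hx) (touches_of_mem_localArcs hA hB ht')]

lemma card_histories_succ (p : Fin n → Step) {k : ℕ} (hk : k < n) :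
    (histories p (k + 1)).card =
      (histories p k).card * stepCount (p ⟨k, hk⟩) (heightAfter p k) := by
  rw [card_eq_sum_card_fiberwise (f := dropArcsAt ⟨k, hk⟩) (t := histories p k)
    fun s hs => mem_histories.2 ((mem_histories.1 hs).drop rfl), sum_const_nat]
  exact fun s hs => (mem_histories.1 hs).card_filter_drop rfl hk.le

lemma card_histories (p : Fin n → Step) :
    (histories p n).card = ∏ i : Fin n, stepCount (p i) (heightAfter p i) := by
  suffices ∀ k ≤ n, (histories p k).card =
      ∏ i ∈ univ.filter (fun i : Fin n => (i : ℕ) < k), stepCount (p i) (heightAfter p i) by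
    simpa [filter_val_lt_of_le] using this n le_rfl
  intro k hk
  induction k with
  | zero =>
    rw [filter_false_of_mem fun i _ => by omega, prod_empty, card_eq_one]
    refine ⟨∅, eq_singleton_iff_unique_mem.2 ⟨mem_histories.2 ⟨by simp, by simp, by simp,
      fun i hi => by omega⟩, fun s hs => ?_⟩⟩
    exact eq_empty_of_forall_notMem fun q hq => by have := (mem_histories.1 hs).lt q hq; omega
  | succ k ih =>
    rw [card_histories_succ p hk, ih (by omega), prod_filter_val_lt_succ _ hk]

end Histories

section Permutations

def permGraph (w : Equiv.Perm (Fin n)) : Finset (Fin n × Fin n) :=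
  univ.image fun i => (i, w i)

lemma mem_permGraph {w : Equiv.Perm (Fin n)} {q : Fin n × Fin n} :
    q ∈ permGraph w ↔ w q.1 = q.2 := by
  constructor
  · simp only [permGraph, mem_image, mem_univ, true_and]
    rintro ⟨i, rfl⟩
    rfl
  · intro h
    exact mem_image.2 ⟨q.1, mem_univ _, Prod.ext rfl h⟩

lemma stepAt_permGraph (w : Equiv.Perm (Fin n)) (i : Fin n) :
    stepAt (permGraph w) i = phi w i := by
  have hU : (∀ q ∈ permGraph w, (q.1 = i → i < q.2) ∧ (q.2 = i → i < q.1)) ↔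
      i < w.symm i ∧ i < w i := by
    simp only [mem_permGraph, Prod.forall]
    refine ⟨fun h => ⟨(h _ _ (w.apply_symm_apply i)).2 rfl, (h _ _ rfl).1 rfl⟩, ?_⟩
    rintro ⟨h₁, h₂⟩ a _ rfl
    refine ⟨fun ha => ha ▸ h₂, fun ha => ?_⟩
    rwa [← w.symm_apply_eq.2 ha.symm]
  have hD : ((∃ q ∈ permGraph w, q.1 = i ∧ q.2 < i) ∧
      ∃ q ∈ permGraph w, q.2 = i ∧ q.1 < i) ↔ w.symm i < i ∧ w i < i := by
    simp only [mem_permGraph, Prod.exists]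
    constructor
    · rintro ⟨⟨a, b, rfl, rfl, hb⟩, ⟨c, d, rfl, rfl, hc⟩⟩
      exact ⟨by rwa [w.symm_apply_apply], hb⟩
    · rintro ⟨h₁, h₂⟩
      exact ⟨⟨i, w i, rfl, rfl, h₂⟩, ⟨w.symm i, i, w.apply_symm_apply i, rfl, h₁⟩⟩
  rw [stepAt, phi, if_congr hU rfl rfl, if_congr hD rfl rfl]

lemma isPartialHistory_permGraph (w : Equiv.Perm (Fin n)) :
    IsPartialHistory (phi w) n (permGraph w) where
  lt q _ := ⟨q.1.isLt, q.2.isLt⟩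
  injOn_fst q hq q' hq' h := by
    simp only [mem_coe, mem_permGraph] at hq hq'
    exact Prod.ext h (hq.symm.trans (h ▸ hq'))
  injOn_snd q hq q' hq' h := by
    simp only [mem_coe, mem_permGraph] at hq hq'
    exact Prod.ext (w.injective (hq.trans (h.trans hq'.symm))) h
  stepAt_eq i _ := stepAt_permGraph w i

lemma IsPartialHistory.exists_permGraph_eq {p : Fin n → Step} {s : Finset (Fin n × Fin n)}
    (hp : IsMotzkin p) (hs : IsPartialHistory p n s) :
    ∃ w : Equiv.Perm (Fin n), phi w = p ∧ permGraph w = s := by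
  have hsrc : ∀ j : Fin n, ∃ v, (j, v) ∈ s := by
    have hempty : openSources s n = ∅ := by
      rw [← card_eq_zero, hs.card_openSources le_rfl, hp.heightAfter_length]
    intro j
    by_contra! h
    have : j ∈ openSources s n := by
      simp only [openSources, mem_filter, mem_univ, true_and]
      exact ⟨j.isLt, fun q hq hqj => h q.2 (hqj ▸ hq)⟩
    simp [hempty] at this
  choose f hf using hsrc
  have hfs := hs.injOn_snd
  have hff := hs.injOn_fst
  simp only [Set.InjOn, mem_coe] at hfs hff
  have hinj : Function.Injective f := fun a b h => congrArg Prod.fst (hfs (hf a) (hf b) h)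
  set w := Equiv.ofBijective f (Finite.injective_iff_bijective.1 hinj)
  have hgraph : permGraph w = s := by
    ext q
    rw [mem_permGraph]
    refine ⟨fun h => ?_, fun hq => congrArg Prod.snd (hff (hf q.1) hq rfl)⟩
    obtain ⟨a, b⟩ := q
    obtain rfl : f a = b := h
    exact hf a
  refine ⟨w, funext fun i => ?_, hgraph⟩
  rw [← stepAt_permGraph, hgraph, hs.stepAt_eq i i.isLt]

lemma card_filter_phi_eq_card_histories {p : Fin n → Step} (hp : IsMotzkin p) :
    (univ.filter fun w : Equiv.Perm (Fin n) => phi w = p).card = (histories p n).card := by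
  refine card_bij (fun w _ => permGraph w) (fun w hw => ?_) (fun w _ w' _ h => ?_)
    fun s hs => ?_
  · obtain rfl := (mem_filter.1 hw).2
    exact mem_histories.2 (isPartialHistory_permGraph w)
  · ext i
    have : (i, w i) ∈ permGraph w' := h ▸ mem_permGraph.2 rfl
    rw [mem_permGraph.1 this]
  · obtain ⟨w, hw, rfl⟩ := (mem_histories.1 hs).exists_permGraph_eq hp
    exact ⟨w, mem_filter.2 ⟨mem_univ _, hw⟩, rfl⟩

end Permutations

/-- For all `n, m ≥ 0`, the number of permutations `w` of `{1,…,n}` with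
`dep(w) = m` equals the sum of `wt(p)` over all Motzkin paths `p` of
length `n` with `ar(p) = m`. -/
theorem card_depth_eq_sum_wt (n m : ℕ) :
    (Finset.univ.filter (fun w : Equiv.Perm (Fin n) => dep w = m)).card =
      ∑ p ∈ Finset.univ.filter
          (fun p : Fin n → Step => IsMotzkin p ∧ area p = (m : ℚ)), wt p := by
  rw [card_eq_sum_card_fiberwise (f := phi)
    (t := univ.filter fun p : Fin n → Step => IsMotzkin p ∧ area p = (m : ℚ)) fun w hw =>
      mem_filter.2 ⟨mem_univ _, isMotzkin_phi w, by rw [area_phi, (mem_filter.1 hw).2]⟩]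
  refine sum_congr rfl fun p hp => ?_
  obtain ⟨hM, harea⟩ := (mem_filter.1 hp).2
  have hfiber : (univ.filter fun w : Equiv.Perm (Fin n) => dep w = m).filter (phi · = p) =
      univ.filter (phi · = p) := by
    rw [filter_filter]
    refine filter_congr fun w _ => and_iff_right_of_imp fun hw => ?_
    exact_mod_cast (area_phi w).symm.trans (hw ▸ harea)
  rw [hfiber, card_filter_phi_eq_card_histories hM, card_histories, hM.wt_eq_prod_stepCount]
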